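/- arXiv:2212.06098 — 2 statements merged into one kernel-verified Lean document; each statement's English description precedes it below -/
import Mathlib

section
/- Suppose m₁, m₂, n₁, n₂ ∈ [x, x+y] are positive integers with m₁m₂ = n₁n₂, parametrized as m₁ = ga, m₂ = hb, n₁ = gb, n₂ = ha with gcd(a,b)=1, a ≠ b and g ≠ h. Then, with δ = y/x ≤ 1, each of a, b, g, h is at least 1/(2δ). In particular, if y ≤ √x / 2 there are no such non-diagonal solutions. -/
lemma aux_one_le_abs_sub (a b : ℕ) (h : a ≠ b) : (1:ℝ) ≤ |(a:ℝ) - b| := by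
  rcases lt_or_gt_of_ne h with hlt | hlt
  · have : (a:ℝ) + 1 ≤ b := by exact_mod_cast hlt
    rw [abs_sub_comm, abs_of_nonneg (by linarith)]; linarith
  · have : (b:ℝ) + 1 ≤ a := by exact_mod_cast hlt
    rw [abs_of_nonneg (by linarith)]; linarith

lemma aux_abs_le (x y u v : ℝ) (h1 : x ≤ u) (h2 : u ≤ x + y) (h3 : x ≤ v)
    (h4 : v ≤ x + y) : |u - v| ≤ y :=
  abs_sub_le_iff.2 ⟨by linarith, by linarith⟩

set_option maxHeartbeats 1000000 in
theorem stmt_16 (x y : ℝ) (hy : 0 < y) (hyx : y ≤ x) (hδ : y / x ≤ 1)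
    (m₁ m₂ n₁ n₂ g h a b : ℕ)
    (hg : 0 < g) (hh : 0 < h) (ha : 0 < a) (hb : 0 < b)
    (hm₁ : x ≤ m₁) (hm₁' : (m₁ : ℝ) ≤ x + y)
    (hm₂ : x ≤ m₂) (hm₂' : (m₂ : ℝ) ≤ x + y)
    (hn₁ : x ≤ n₁) (hn₁' : (n₁ : ℝ) ≤ x + y)
    (hn₂ : x ≤ n₂) (hn₂' : (n₂ : ℝ) ≤ x + y)
    (heq : m₁ * m₂ = n₁ * n₂)
    (hpa : m₁ = g * a) (hpb : m₂ = h * b) (hpc : n₁ = g * b) (hpd : n₂ = h * a)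
    (hab : Nat.Coprime a b) (hab' : a ≠ b) (hgh : g ≠ h) :
    (1 / (2 * (y / x)) ≤ (a : ℝ) ∧ 1 / (2 * (y / x)) ≤ (b : ℝ) ∧
      1 / (2 * (y / x)) ≤ (g : ℝ) ∧ 1 / (2 * (y / x)) ≤ (h : ℝ)) ∧
    (y ≤ Real.sqrt x / 2 → False) := by
  have hx : 0 < x := lt_of_lt_of_le hy hyx
  have ca : (m₁:ℝ) = (g:ℝ) * a := by exact_mod_cast hpa
  have cb : (m₂:ℝ) = (h:ℝ) * b := by exact_mod_cast hpb
  have cc : (n₁:ℝ) = (g:ℝ) * b := by exact_mod_cast hpc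
  have cd : (n₂:ℝ) = (h:ℝ) * a := by exact_mod_cast hpd
  have hg' : (0:ℝ) < g := by exact_mod_cast hg
  have hh' : (0:ℝ) < h := by exact_mod_cast hh
  have ha' : (0:ℝ) < a := by exact_mod_cast ha
  have hb' : (0:ℝ) < b := by exact_mod_cast hb
  -- g ≤ y
  have gy : (g:ℝ) ≤ y := by
    calc (g:ℝ) = (g:ℝ) * 1 := by ring
    _ ≤ (g:ℝ) * |(a:ℝ) - b| := by
        exact mul_le_mul_of_nonneg_left (aux_one_le_abs_sub a b hab') hg'.le
    _ = |(m₁:ℝ) - n₁| := by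
        rw [ca, cc, ← mul_sub, abs_mul, abs_of_pos hg']
    _ ≤ y := aux_abs_le x y _ _ hm₁ hm₁' hn₁ hn₁'
  have hy' : (h:ℝ) ≤ y := by
    calc (h:ℝ) = (h:ℝ) * 1 := by ring
    _ ≤ (h:ℝ) * |(b:ℝ) - a| := by
        exact mul_le_mul_of_nonneg_left (aux_one_le_abs_sub b a (Ne.symm hab')) hh'.le
    _ = |(m₂:ℝ) - n₂| := by
        rw [cb, cd, ← mul_sub, abs_mul, abs_of_pos hh']
    _ ≤ y := aux_abs_le x y _ _ hm₂ hm₂' hn₂ hn₂'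
  have ay : (a:ℝ) ≤ y := by
    calc (a:ℝ) = (a:ℝ) * 1 := by ring
    _ ≤ (a:ℝ) * |(g:ℝ) - h| := by
        exact mul_le_mul_of_nonneg_left (aux_one_le_abs_sub g h hgh) ha'.le
    _ = |(m₁:ℝ) - n₂| := by
        rw [ca, cd, show (g:ℝ)*a - (h:ℝ)*a = (a:ℝ)*((g:ℝ)-h) by ring, abs_mul, abs_of_pos ha']
    _ ≤ y := aux_abs_le x y _ _ hm₁ hm₁' hn₂ hn₂'
  have by' : (b:ℝ) ≤ y := by
    calc (b:ℝ) = (b:ℝ) * 1 := by ring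
    _ ≤ (b:ℝ) * |(g:ℝ) - h| := by
        exact mul_le_mul_of_nonneg_left (aux_one_le_abs_sub g h hgh) hb'.le
    _ = |(n₁:ℝ) - m₂| := by
        rw [cc, cb, show (g:ℝ)*b - (h:ℝ)*b = (b:ℝ)*((g:ℝ)-h) by ring, abs_mul, abs_of_pos hb']
    _ ≤ y := aux_abs_le x y _ _ hn₁ hn₁' hm₂ hm₂'
  -- main bound helper
  have key : ∀ n : ℕ, x ≤ y * n → 1 / (2 * (y / x)) ≤ (n:ℝ) := by
    intro n hn
    have h1 : 1 / (2 * (y / x)) = x / (2 * y) := by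
      field_simp
    rw [h1, div_le_iff₀ (by linarith)]
    nlinarith [(Nat.cast_nonneg n : (0:ℝ) ≤ n)]
  have xga : x ≤ (g:ℝ) * a := ca ▸ hm₁
  have xgb : x ≤ (g:ℝ) * b := cc ▸ hn₁
  have xha : x ≤ (h:ℝ) * a := cd ▸ hn₂
  refine ⟨⟨key a (le_trans xga (mul_le_mul_of_nonneg_right gy ha'.le)),
    key b (le_trans xgb (mul_le_mul_of_nonneg_right gy hb'.le)),
    key g (le_trans xga (by nlinarith [ay, hg'.le])),
    key h (le_trans xha (by nlinarith [ay, hh'.le]))⟩, ?_⟩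
  intro hsq
  have hs : Real.sqrt x ^ 2 = x := Real.sq_sqrt hx.le
  nlinarith [xga, Real.sqrt_nonneg x]
end

section
/- Let θ be an irrational real number satisfying ‖qθ‖ ≥ C·exp(−q^{1/50}) for all positive integers q, where C > 0 and ‖·‖ denotes distance to the nearest integer. Let L(x) be the set of integers ℓ with |ℓ| ≤ √x such that there exists a positive integer v ≤ (log x)⁵ with ‖vℓθ‖ ≤ x^{−1/3}. Then 0 ∈ L(x), and for x sufficiently large, any two distinct elements ℓ₁, ℓ₂ ∈ L(x) satisfy |ℓ₁ − ℓ₂| ≥ (log x)⁵. -/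
open Filter Real

lemma aux_ev (C : ℝ) (hC : 0 < C) :
    ∀ᶠ y : ℝ in atTop,
      2 * y ^ 5 * Real.exp (-(y / 3)) < C * Real.exp (-(y ^ ((3 : ℝ) / 10))) := by
  have hdiv : Tendsto (fun y : ℝ => y / 6) atTop atTop :=
    Tendsto.atTop_div_const (by norm_num) tendsto_id
  have h0 : Tendsto (fun y : ℝ => 2 * 6 ^ 5 * ((y / 6) ^ 5 * Real.exp (-(y / 6))))
      atTop (nhds 0) := by
    have := ((Real.tendsto_pow_mul_exp_neg_atTop_nhds_zero 5).comp hdiv).const_mul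
      (2 * 6 ^ 5 : ℝ)
    simpa [Function.comp] using this
  have h1 : Tendsto (fun y : ℝ => 2 * y ^ 5 * Real.exp (-(y / 6))) atTop (nhds 0) :=
    h0.congr (fun y => by ring)
  have h2 : ∀ᶠ y : ℝ in atTop, 2 * y ^ 5 * Real.exp (-(y / 6)) < C :=
    h1.eventually_lt_const hC
  filter_upwards [h2, eventually_ge_atTop (36 : ℝ)] with y h1' h36
  have hy1 : (1 : ℝ) ≤ y := by linarith
  have hsq : y ^ ((3 : ℝ) / 10) ≤ y / 6 := by
    have ha : y ^ ((3 : ℝ) / 10) ≤ y ^ ((1 : ℝ) / 2) :=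
      Real.rpow_le_rpow_of_exponent_le hy1 (by norm_num)
    have hb : y ^ ((1 : ℝ) / 2) = Real.sqrt y := (Real.sqrt_eq_rpow y).symm
    have hc : Real.sqrt y ≤ y / 6 := by
      have : Real.sqrt y ≤ Real.sqrt ((y / 6) ^ 2) := by
        apply Real.sqrt_le_sqrt; nlinarith
      rwa [Real.sqrt_sq (by linarith : (0:ℝ) ≤ y / 6)] at this
    calc y ^ ((3 : ℝ) / 10) ≤ y ^ ((1 : ℝ) / 2) := ha
      _ = Real.sqrt y := hb
      _ ≤ y / 6 := hc
  have hpow : (0:ℝ) ≤ 2 * y ^ 5 := by positivity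
  calc 2 * y ^ 5 * Real.exp (-(y / 3))
      ≤ 2 * y ^ 5 * (Real.exp (-(y ^ ((3 : ℝ) / 10))) * Real.exp (-(y / 6))) := by
        apply mul_le_mul_of_nonneg_left _ hpow
        rw [← Real.exp_add]
        exact Real.exp_le_exp.mpr (by linarith)
    _ = (2 * y ^ 5 * Real.exp (-(y / 6))) * Real.exp (-(y ^ ((3 : ℝ) / 10))) := by ring
    _ < C * Real.exp (-(y ^ ((3 : ℝ) / 10))) :=
        mul_lt_mul_of_pos_right h1' (Real.exp_pos _)

lemma aux_ev_x (C : ℝ) (hC : 0 < C) :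
    ∀ᶠ x : ℝ in atTop,
      2 * (Real.log x) ^ 5 * x ^ (-(1 : ℝ) / 3)
        < C * Real.exp (-((Real.log x) ^ ((3 : ℝ) / 10))) := by
  filter_upwards [Real.tendsto_log_atTop.eventually (aux_ev C hC),
    eventually_gt_atTop (0 : ℝ)] with x h1 hx0
  have : x ^ (-(1 : ℝ) / 3) = Real.exp (-(Real.log x / 3)) := by
    rw [Real.rpow_def_of_pos hx0]; congr 1; ring
  rwa [this]


/-- `ℓ` belongs to the set `L(x)`: `|ℓ| ≤ √x` and there is a positive integer
`v ≤ (log x)^5` with `‖v ℓ θ‖ ≤ x^{-1/3}`, where `‖t‖` denotes the distance from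
`t` to the nearest integer. -/
def memL (θ x : ℝ) (ℓ : ℤ) : Prop :=
  |(ℓ : ℝ)| ≤ Real.sqrt x ∧
    ∃ v : ℕ, 0 < v ∧ (v : ℝ) ≤ (Real.log x) ^ 5 ∧
      |(v : ℝ) * (ℓ : ℝ) * θ - round ((v : ℝ) * (ℓ : ℝ) * θ)| ≤ x ^ (-(1 : ℝ) / 3)

theorem stmt_18 (θ : ℝ) (hθ : Irrational θ) (C : ℝ) (hC : 0 < C)
    (hdio : ∀ q : ℕ, 0 < q →
      C * Real.exp (-((q : ℝ) ^ ((1 : ℝ) / 50))) ≤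
        |(q : ℝ) * θ - round ((q : ℝ) * θ)|) :
    ∃ x₀ : ℝ, ∀ x : ℝ, x₀ ≤ x →
      memL θ x 0 ∧
      ∀ ℓ₁ ℓ₂ : ℤ, memL θ x ℓ₁ → memL θ x ℓ₂ → ℓ₁ ≠ ℓ₂ →
        (Real.log x) ^ 5 ≤ |((ℓ₁ - ℓ₂ : ℤ) : ℝ)| := by
  obtain ⟨x₀', hx₀'⟩ := eventually_atTop.mp (aux_ev_x C hC)
  refine ⟨max x₀' (Real.exp 1), fun x hx => ?_⟩
  have hx1 : x₀' ≤ x := le_trans (le_max_left _ _) hx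
  have hxe : Real.exp 1 ≤ x := le_trans (le_max_right _ _) hx
  have hx0 : (0 : ℝ) < x := lt_of_lt_of_le (Real.exp_pos 1) hxe
  have hlog : (1 : ℝ) ≤ Real.log x := (Real.le_log_iff_exp_le hx0).mpr hxe
  have hlogpos : (0 : ℝ) < Real.log x := by linarith
  have hkey := hx₀' x hx1
  constructor
  · refine ⟨by simp [Real.sqrt_nonneg], 1, one_pos, (by push_cast; exact one_le_pow₀ hlog), ?_⟩
    simp only [Int.cast_zero, mul_zero, Nat.cast_one]
    norm_num
    positivity
  · intro ℓ₁ ℓ₂ h₁ h₂ hne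
    by_contra hcon
    push_neg at hcon
    obtain ⟨hb₁, v₁, hv₁0, hv₁le, hv₁⟩ := h₁
    obtain ⟨hb₂, v₂, hv₂0, hv₂le, hv₂⟩ := h₂
    set d : ℤ := ℓ₁ - ℓ₂ with hd_def
    have hd : d ≠ 0 := sub_ne_zero.mpr hne
    set q : ℕ := v₁ * v₂ * d.natAbs with hq_def
    have hq0 : 0 < q :=
      Nat.mul_pos (Nat.mul_pos hv₁0 hv₂0) (Int.natAbs_pos.mpr hd)
    have hqcast : (q : ℝ) = (v₁ : ℝ) * (v₂ : ℝ) * |(d : ℝ)| := by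
      simp only [hq_def]
      push_cast [Nat.cast_natAbs]
      ring
    have hv₁nn : (0:ℝ) ≤ (v₁ : ℝ) := Nat.cast_nonneg _
    have hv₂nn : (0:ℝ) ≤ (v₂ : ℝ) := Nat.cast_nonneg _
    have hq_le : (q : ℝ) ≤ (Real.log x) ^ 15 := by
      rw [hqcast]
      have h5 : (0:ℝ) ≤ (Real.log x) ^ 5 := by positivity
      calc (v₁ : ℝ) * (v₂ : ℝ) * |(d : ℝ)|
          ≤ (Real.log x) ^ 5 * (Real.log x) ^ 5 * (Real.log x) ^ 5 := by
            apply mul_le_mul (mul_le_mul hv₁le hv₂le hv₂nn h5) hcon.le (abs_nonneg _)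
            positivity
        _ = (Real.log x) ^ 15 := by ring
    have hexp_le : Real.exp (-((Real.log x) ^ ((3 : ℝ) / 10)))
        ≤ Real.exp (-((q : ℝ) ^ ((1 : ℝ) / 50))) := by
      apply Real.exp_le_exp.mpr
      apply neg_le_neg
      calc (q : ℝ) ^ ((1 : ℝ) / 50)
          ≤ ((Real.log x) ^ 15) ^ ((1 : ℝ) / 50) :=
            Real.rpow_le_rpow (Nat.cast_nonneg q) hq_le (by norm_num)
        _ = (Real.log x) ^ ((3 : ℝ) / 10) := by
            rw [← Real.rpow_natCast (Real.log x) 15, ← Real.rpow_mul hlogpos.le]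
            norm_num
    set t₁ := (v₁ : ℝ) * (ℓ₁ : ℝ) * θ with ht₁
    set t₂ := (v₂ : ℝ) * (ℓ₂ : ℝ) * θ with ht₂
    set m : ℤ := (v₂ : ℤ) * round t₁ - (v₁ : ℤ) * round t₂ with hm
    have hmt : |((v₁ : ℝ) * (v₂ : ℝ) * (d : ℝ)) * θ - (m : ℝ)|
        ≤ 2 * (Real.log x) ^ 5 * x ^ (-(1 : ℝ) / 3) := by
      have heq : ((v₁ : ℝ) * (v₂ : ℝ) * (d : ℝ)) * θ - (m : ℝ)
          = (v₂ : ℝ) * (t₁ - round t₁) - (v₁ : ℝ) * (t₂ - round t₂) := by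
        simp only [hd_def, hm, ht₁, ht₂]
        push_cast
        ring
      rw [heq]
      have hxp : (0:ℝ) ≤ x ^ (-(1 : ℝ) / 3) := Real.rpow_nonneg hx0.le _
      calc |(v₂ : ℝ) * (t₁ - round t₁) - (v₁ : ℝ) * (t₂ - round t₂)|
          ≤ |(v₂ : ℝ) * (t₁ - round t₁)| + |(v₁ : ℝ) * (t₂ - round t₂)| := abs_sub _ _
        _ = (v₂ : ℝ) * |t₁ - round t₁| + (v₁ : ℝ) * |t₂ - round t₂| := by
            rw [abs_mul, abs_mul, abs_of_nonneg hv₂nn, abs_of_nonneg hv₁nn]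
        _ ≤ (Real.log x) ^ 5 * (x ^ (-(1 : ℝ) / 3)) + (Real.log x) ^ 5 * (x ^ (-(1 : ℝ) / 3)) := by
            apply add_le_add
            · exact mul_le_mul hv₂le hv₁ (abs_nonneg _) (by positivity)
            · exact mul_le_mul hv₁le hv₂ (abs_nonneg _) (by positivity)
        _ = 2 * (Real.log x) ^ 5 * x ^ (-(1 : ℝ) / 3) := by ring
    have hq_small : |(q : ℝ) * θ - round ((q : ℝ) * θ)|
        ≤ 2 * (Real.log x) ^ 5 * x ^ (-(1 : ℝ) / 3) := by
      rcases abs_choice ((d : ℝ)) with h | h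
      · have hqe : (q : ℝ) * θ = ((v₁ : ℝ) * (v₂ : ℝ) * (d : ℝ)) * θ := by
          rw [hqcast, h]
        rw [hqe]
        exact (round_le _ m).trans hmt
      · have hqe : (q : ℝ) * θ = -(((v₁ : ℝ) * (v₂ : ℝ) * (d : ℝ)) * θ) := by
          rw [hqcast, h]; ring
        rw [hqe]
        refine (round_le _ (-m)).trans ?_
        have : |-(((v₁ : ℝ) * (v₂ : ℝ) * (d : ℝ)) * θ) - ((-m : ℤ) : ℝ)|
            = |((v₁ : ℝ) * (v₂ : ℝ) * (d : ℝ)) * θ - (m : ℝ)| := by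
          rw [← abs_neg]; push_cast; ring_nf
        rw [this]
        exact hmt
    have hfinal : C * Real.exp (-((Real.log x) ^ ((3 : ℝ) / 10)))
        ≤ 2 * (Real.log x) ^ 5 * x ^ (-(1 : ℝ) / 3) :=
      le_trans (mul_le_mul_of_nonneg_left hexp_le hC.le) ((hdio q hq0).trans hq_small)
    linarith
end
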